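/- In the Laurent polynomial ring Z[Y_{i,q^l}^{±1} : i ∈ I, l ∈ Z] over a finite index set I, a product of right-negative monomials is right-negative. -/
import Mathlib


/-- A monomial in `ℤ[Y_{i,q^l}^{±1}]` is encoded by its finitely supported
exponent function `u : I × ℤ → ℤ` (multiplication of monomials = addition of
exponent functions).  `l` is a top level of `u` if some exponent at level `l`
is nonzero and all exponents at levels `> l` vanish. -/
def IsTopLevel {I : Type*} (u : (I × ℤ) →₀ ℤ) (l : ℤ) : Prop :=
  (∃ j : I, u (j, l) ≠ 0) ∧ ∀ l' : ℤ, l < l' → ∀ j : I, u (j, l') = 0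

/-- `u ≠ 1` is right-negative if all exponents at every top level are `≤ 0`. -/
def RightNegative {I : Type*} (u : (I × ℤ) →₀ ℤ) : Prop :=
  u ≠ 0 ∧ ∀ l : ℤ, IsTopLevel u l → ∀ i : I, u (i, l) ≤ 0

/-- A product of right-negative monomials is right-negative. -/
theorem stmt_2 {I : Type*} [Fintype I] (n : ℕ) (hn : 0 < n)
    (u : Fin n → ((I × ℤ) →₀ ℤ)) (hu : ∀ k, RightNegative (u k)) :
    RightNegative (∑ k, u k) := by
  classical
  have hs0 : u ⟨0, hn⟩ ≠ 0 := (hu _).1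
  set T : Finset ℤ := (Finset.univ.biUnion fun k => (u k).support).image Prod.snd with hT
  have hTne : T.Nonempty := by
    obtain ⟨p, hp⟩ := Finsupp.support_nonempty_iff.mpr hs0
    exact ⟨p.2, Finset.mem_image.mpr ⟨p,
      Finset.mem_biUnion.mpr ⟨⟨0, hn⟩, Finset.mem_univ _, hp⟩, rfl⟩⟩
  set L := T.max' hTne with hL
  have hsum : ∀ i l, (∑ k, u k) (i, l) = ∑ k, u k (i, l) := by
    intro i l; simp [Finsupp.finset_sum_apply]
  have hzero : ∀ l, L < l → ∀ (j : I) k, u k (j, l) = 0 := by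
    intro l hl j k
    by_contra h
    have hmem : l ∈ T := Finset.mem_image.mpr ⟨(j, l),
      Finset.mem_biUnion.mpr ⟨k, Finset.mem_univ _, Finsupp.mem_support_iff.mpr h⟩, rfl⟩
    exact absurd (T.le_max' l hmem) (not_le.mpr hl)
  have hle : ∀ k (i : I), u k (i, L) ≤ 0 := by
    intro k i
    by_cases h : ∃ j, u k (j, L) ≠ 0
    · exact (hu k).2 L ⟨h, fun l' hl' j => hzero l' hl' j k⟩ i
    · push_neg at h
      simp [h i]
  obtain ⟨p, hpmem, hpL⟩ := Finset.mem_image.mp (T.max'_mem hTne)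
  obtain ⟨k0, -, hk0⟩ := Finset.mem_biUnion.mp hpmem
  have hk0' : u k0 (p.1, L) ≠ 0 := by
    rw [hL, ← hpL]
    exact Finsupp.mem_support_iff.mp (by simpa using hk0)
  have hneg : (∑ k, u k) (p.1, L) < 0 := by
    rw [hsum]
    have := Finset.sum_lt_sum (g := fun _ : Fin n => (0 : ℤ))
      (fun k _ => hle k p.1)
      ⟨k0, Finset.mem_univ _, lt_of_le_of_ne (hle k0 p.1) hk0'⟩
    simpa using this
  constructor
  · intro h0
    rw [h0] at hneg
    simp at hneg
  · intro l hl i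
    have hlL : l = L := by
      rcases lt_trichotomy l L with h | h | h
      · exact absurd (hl.2 L h p.1) (ne_of_lt hneg)
      · exact h
      · obtain ⟨j, hj⟩ := hl.1
        refine absurd ?_ hj
        rw [hsum]
        exact Finset.sum_eq_zero fun k _ => hzero l h j k
    rw [hlL, hsum]
    exact Finset.sum_nonpos fun k _ => hle k i
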